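/- arXiv:2405.10599 — 3 statements merged into one kernel-verified Lean document; each statement's English description precedes it below -/
import Mathlib

section
/- For every real p with 0 < p < 1 and p ≠ 1/2, one has log₂(1 + 2·√(p·(1−p))) > −p·log₂ p − (1−p)·log₂(1−p), with equality when p = 1/2. -/
/-!
The left side is the Rényi entropy of order `1/2` of the distribution `(p, 1 - p)`, since
`1 + 2√(p(1-p)) = (√p + √(1-p))²`, and it dominates the Shannon entropy by strict concavity of
`log`: Jensen at the points `1/√pᵢ` with weights `pᵢ` gives `½ H(p) < log ∑ √pᵢ`, strictly
unless the distribution is uniform.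
-/

open Real Finset

theorem neg_sum_mul_log_lt_two_mul_log_sum_sqrt {ι : Type*} {s : Finset ι} {w : ι → ℝ}
    (hw : ∀ i ∈ s, 0 < w i) (hsum : ∑ i ∈ s, w i = 1) (hne : ∃ j ∈ s, ∃ k ∈ s, w j ≠ w k) :
    -∑ i ∈ s, w i * log (w i) < 2 * log (∑ i ∈ s, √(w i)) := by
  have jensen := strictConcaveOn_log_Ioi.lt_map_sum (p := fun i ↦ (√(w i))⁻¹) hw hsum
    (fun i hi ↦ inv_pos.2 (sqrt_pos.2 (hw i hi))) (by
      obtain ⟨j, hj, k, hk, hjk⟩ := hne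
      refine ⟨j, hj, k, hk, fun h ↦ hjk ?_⟩
      rwa [inv_inj, sqrt_inj (hw j hj).le (hw k hk).le] at h)
  have hpoint : ∀ i ∈ s, w i • (√(w i))⁻¹ = √(w i) := fun i _ ↦ by
    rw [smul_eq_mul, ← div_eq_mul_inv, div_sqrt]
  have hlog : ∀ i ∈ s, w i • log (√(w i))⁻¹ = -(w i * log (w i)) / 2 := fun i hi ↦ by
    rw [smul_eq_mul, log_inv, log_sqrt (hw i hi).le]
    ring
  rw [sum_congr rfl hpoint, sum_congr rfl hlog, ← sum_div, sum_neg_distrib] at jensen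
  linarith

theorem binEnt_lt_two_mul_log_sqrt_add_sqrt {p : ℝ} (hp0 : 0 < p) (hp1 : p < 1)
    (hp : p ≠ 1 / 2) :
    -p * log p - (1 - p) * log (1 - p) < 2 * log (√p + √(1 - p)) := by
  have h := neg_sum_mul_log_lt_two_mul_log_sum_sqrt (s := univ) (w := ![p, 1 - p])
    (by simp [Fin.forall_fin_two, hp0, hp1]) (by simp)
    ⟨0, mem_univ _, 1, mem_univ _, show p ≠ 1 - p from fun h ↦ hp (by linarith)⟩
  simp only [Fin.sum_univ_two, Matrix.cons_val_zero, Matrix.cons_val_one] at h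
  linarith

theorem one_add_two_mul_sqrt_mul_eq_sq {p q : ℝ} (hp : 0 ≤ p) (hq : 0 ≤ q) (hpq : p + q = 1) :
    1 + 2 * √(p * q) = (√p + √q) ^ 2 := by
  rw [sqrt_mul hp, add_sq, sq_sqrt hp, sq_sqrt hq]
  linarith

/-- Logarithmic negativity exceeds entanglement cost for non-maximally
entangled pure qubit states: for `0 < p < 1`,
`log₂(1+2√(p(1−p))) > h(p)` iff `p ≠ 1/2`, with equality at `p = 1/2`. -/
theorem logNeg_gt_binEnt (p : ℝ) (hp0 : 0 < p) (hp1 : p < 1) :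
    (p ≠ 1 / 2 →
      Real.logb 2 (1 + 2 * Real.sqrt (p * (1 - p))) >
        -p * Real.logb 2 p - (1 - p) * Real.logb 2 (1 - p)) ∧
    (p = 1 / 2 →
      Real.logb 2 (1 + 2 * Real.sqrt (p * (1 - p))) =
        -p * Real.logb 2 p - (1 - p) * Real.logb 2 (1 - p)) := by
  constructor
  · intro hp
    rw [one_add_two_mul_sqrt_mul_eq_sq hp0.le (by linarith) (by ring), gt_iff_lt]
    calc -p * logb 2 p - (1 - p) * logb 2 (1 - p)
        = (-p * log p - (1 - p) * log (1 - p)) / log 2 := by simp only [logb]; ring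
      _ < 2 * log (√p + √(1 - p)) / log 2 := by
        gcongr
        exact binEnt_lt_two_mul_log_sqrt_add_sqrt hp0 hp1 hp
      _ = logb 2 ((√p + √(1 - p)) ^ 2) := by rw [logb, log_pow, Nat.cast_ofNat]
  · rintro rfl
    have hsqrt : √((1 : ℝ) / 4) = 1 / 2 := by
      rw [sqrt_eq_iff_mul_self_eq_of_pos] <;> norm_num
    have hlogb : logb 2 (1 / 2) = -1 := by
      rw [one_div, logb_inv, logb_self_eq_one one_lt_two]
    norm_num [hsqrt, hlogb]
end

section
/- With h(p) = −p·log₂ p − (1−p)·log₂(1−p), the ratio log₂(1 + 2·√(p·(1−p))) / h(p) tends to +∞ as p tends to 1 from the left. -/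
open Real Filter Topology

/-- The self-dilution rate `E_n/E_c = log₂(1+2√(p(1−p))) / h(p)` diverges as
`p → 1⁻`. -/
theorem self_dilution_rate_tendsto_atTop :
    Tendsto
      (fun p : ℝ =>
        Real.logb 2 (1 + 2 * Real.sqrt (p * (1 - p))) /
          (-p * Real.logb 2 p - (1 - p) * Real.logb 2 (1 - p)))
      (nhdsWithin 1 (Set.Iio 1)) atTop := by
  -- the lower bound function
  set g : ℝ → ℝ := fun p => (2 * Real.sqrt (1 - p) * (2 - Real.log (1 - p)))⁻¹ with hg
  -- Step 1: `1 - p → 0⁺` as `p → 1⁻`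
  have h1 : Tendsto (fun p : ℝ => 1 - p) (𝓝[<] 1) (𝓝[>] 0) := by
    rw [tendsto_nhdsWithin_iff]
    constructor
    · have hc : Continuous (fun p : ℝ => 1 - p) := by continuity
      have : Tendsto (fun p : ℝ => 1 - p) (𝓝 1) (𝓝 0) := by
        simpa using hc.tendsto (1 : ℝ)
      exact this.mono_left nhdsWithin_le_nhds
    · filter_upwards [self_mem_nhdsWithin] with p (hp : p < 1)
      simpa using hp
  -- Step 2: `2 √q (2 - log q) → 0⁺` as `q → 0⁺`
  have h2 : Tendsto (fun q : ℝ => 2 * Real.sqrt q * (2 - Real.log q)) (𝓝[>] 0) (𝓝[>] 0) := by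
    rw [tendsto_nhdsWithin_iff]
    constructor
    · have hlr : Tendsto (fun q : ℝ => Real.log q * q ^ (1 / 2 : ℝ)) (𝓝[>] 0) (𝓝 0) :=
        tendsto_log_mul_rpow_nhdsGT_zero (by norm_num)
      have hsq : Tendsto (fun q : ℝ => Real.sqrt q) (𝓝[>] 0) (𝓝 0) := by
        have := (Real.continuous_sqrt.tendsto 0).mono_left (nhdsWithin_le_nhds (s := Set.Ioi 0))
        simpa using this
      have := (hsq.const_mul 4).sub (hlr.const_mul 2)
      simp only [mul_zero, sub_zero, zero_sub] at this
      have h0 : Tendsto (fun q : ℝ => 4 * Real.sqrt q - 2 * (Real.log q * q ^ (1 / 2 : ℝ)))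
          (𝓝[>] 0) (𝓝 0) := by simpa using this
      refine h0.congr' ?_
      filter_upwards [self_mem_nhdsWithin] with q (hq : 0 < q)
      rw [← Real.sqrt_eq_rpow]
      ring
    · filter_upwards [Ioo_mem_nhdsGT_of_mem (by norm_num : (0:ℝ) ∈ Set.Ico 0 1)] with q hq
      have h1q : 0 < Real.sqrt q := Real.sqrt_pos.2 hq.1
      have h2q : Real.log q < 0 := Real.log_neg hq.1 hq.2
      have ha : (0:ℝ) < 2 * Real.sqrt q := by positivity
      have hb : (0:ℝ) < 2 - Real.log q := by linarith
      show (0:ℝ) < 2 * Real.sqrt q * (2 - Real.log q)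
      exact mul_pos ha hb
  have h4 : Tendsto g (𝓝[<] 1) atTop := by
    have h3 := (h2.comp h1).inv_tendsto_nhdsGT_zero
    exact h3
  -- Step 3: eventual comparison
  refine tendsto_atTop_mono' _ ?_ h4
  filter_upwards [Ioo_mem_nhdsLT_of_mem (by norm_num : (1:ℝ) ∈ Set.Ioc (1/2) 1)] with p hp
  obtain ⟨hp2, hp1⟩ := hp
  set q : ℝ := 1 - p with hqdef
  have hp0 : (0:ℝ) < p := by linarith
  have hq0 : (0:ℝ) < q := by simp [hqdef]; linarith
  have hq1 : q < 1 := by simp [hqdef]; linarith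
  have L2 : (0:ℝ) < Real.log 2 := Real.log_pos (by norm_num)
  have hlq : Real.log q < 0 := Real.log_neg hq0 hq1
  have hlp : Real.log p < 0 := Real.log_neg hp0 hp1
  have hsqq : Real.sqrt q * Real.sqrt q = q := Real.mul_self_sqrt hq0.le
  have hsq0 : 0 < Real.sqrt q := Real.sqrt_pos.2 hq0
  -- denominator bounds
  have hplog : -(p * Real.log p) ≤ q := by
    have h := Real.log_le_sub_one_of_pos (x := p⁻¹) (by positivity)
    rw [Real.log_inv] at h
    have hppos := hp0
    have : p * (-Real.log p) ≤ p * (p⁻¹ - 1) := by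
      apply mul_le_mul_of_nonneg_left (by linarith) hp0.le
    have hpi : p * (p⁻¹ - 1) = 1 - p := by field_simp
    nlinarith
  have hD'pos : 0 < -p * Real.log p - q * Real.log q := by nlinarith
  have hD'le : -p * Real.log p - q * Real.log q ≤ q * (2 - Real.log q) := by nlinarith
  -- numerator bound
  set s : ℝ := Real.sqrt (p * (1 - p)) with hs
  have hs0 : 0 ≤ s := Real.sqrt_nonneg _
  have hs2 : s * s = p * (1 - p) := Real.mul_self_sqrt (by nlinarith)
  have hshalf : s ≤ 1 / 2 := by nlinarith
  have hslb : Real.sqrt q / 2 ≤ s := by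
    have h1' : Real.sqrt (q / 4) ≤ s := Real.sqrt_le_sqrt (by nlinarith)
    have h2' : Real.sqrt (q / 4) = Real.sqrt q / 2 := by
      rw [show (q / 4 : ℝ) = q * (1/2)^2 by ring, Real.sqrt_mul hq0.le,
        Real.sqrt_sq (by norm_num)]
      ring
    linarith [h2' ▸ h1']
  have hNlog : Real.sqrt q / 2 ≤ Real.log (1 + 2 * s) := by
    have hpos : (0:ℝ) < 1 + 2 * s := by linarith
    have h := Real.log_le_sub_one_of_pos (x := (1 + 2 * s)⁻¹) (by positivity)
    rw [Real.log_inv] at h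
    have hinv : (1 + 2 * s) * (1 + 2 * s)⁻¹ = 1 := mul_inv_cancel₀ (by positivity)
    -- log(1+2s) ≥ 1 - (1+2s)⁻¹ ≥ s
    have h2' : s ≤ 1 - (1 + 2 * s)⁻¹ := by nlinarith [inv_nonneg.2 hpos.le]
    linarith
  -- put things together
  have hlogb_num : Real.logb 2 (1 + 2 * s) = Real.log (1 + 2 * s) / Real.log 2 := rfl
  have hlogb_den : -p * Real.logb 2 p - q * Real.logb 2 q
      = (-p * Real.log p - q * Real.log q) / Real.log 2 := by
    simp only [Real.logb]
    field_simp
  have hcancel : ∀ a b : ℝ, a / Real.log 2 / (b / Real.log 2) = a / b := by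
    intro a b
    rcases eq_or_ne b 0 with hb | hb
    · simp [hb]
    · field_simp
  have hratio : Real.logb 2 (1 + 2 * s) / (-p * Real.logb 2 p - q * Real.logb 2 q)
      = Real.log (1 + 2 * s) / (-p * Real.log p - q * Real.log q) := by
    rw [hlogb_num, hlogb_den, hcancel]
  rw [hratio]
  have hdiv : (Real.sqrt q / 2) / (q * (2 - Real.log q))
      ≤ Real.log (1 + 2 * s) / (-p * Real.log p - q * Real.log q) :=
    div_le_div₀ (by linarith) hNlog hD'pos hD'le
  have hkey : g p = (Real.sqrt q / 2) / (q * (2 - Real.log q)) := by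
    simp only [hg, ← hqdef]
    rw [← hsqq]
    have h2lq : (2 : ℝ) - Real.log q ≠ 0 := by nlinarith
    rw [hsqq]
    field_simp
    rw [sq, hsqq]
  rw [hkey]
  exact hdiv
end

section
/- Let M be a commutative monoid, R a reflexive relation on M compatible with multiplication, and E : M → ℝ additive and monotone under R. Define the zero-error battery-assisted rate R_ze(a→b) as the supremum of m/n over positive integers m, n for which there exist τ, τ' ∈ M with (a^n * τ) R (b^m * τ') and E(τ') ≥ E(τ). If E(a) > 0 and E(b) > 0, then R_ze(a→b)·R_ze(b→a) = 1. -/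
/-!
A battery can never gain energy, and `E` is additive and monotone along `R`, so a
conversion `aⁿ τ R bᵐ τ'` with `E τ' ≥ E τ` forces `m E(b) ≤ n E(a)`; conversely, when
`m E(b) ≤ n E(a)` the batteries `τ = bᵐ`, `τ' = aⁿ` turn the conversion into an instance
of reflexivity. Hence the achievable ratios `m / n` are exactly the positive rationals
below `E(a) / E(b)`, whose supremum is `E(a) / E(b)`, and the two rates are reciprocal.
-/

lemma map_pow_of_map_mul {M : Type*} [Monoid M] (E : M → ℝ)
    (hadd : ∀ a b, E (a * b) = E a + E b) (a : M) (n : ℕ) :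
    E (a ^ n) = n * E a := by
  induction n with
  | zero =>
    have h1 : E 1 = E 1 + E 1 := by rw [← hadd, one_mul]
    simp only [pow_zero, Nat.cast_zero, zero_mul]
    linarith
  | succ k ih =>
    rw [pow_succ, hadd, ih, Nat.cast_succ]
    ring

lemma exists_battery_conversion_iff {M : Type*} [CommMonoid M] (R : M → M → Prop)
    (hrefl : ∀ a, R a a) (E : M → ℝ) (hadd : ∀ a b, E (a * b) = E a + E b)
    (hmono : ∀ a b, R a b → E a ≥ E b) (a b : M) (m n : ℕ) :
    (∃ τ τ' : M, R (a ^ n * τ) (b ^ m * τ') ∧ E τ' ≥ E τ) ↔ m * E b ≤ n * E a := by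
  constructor
  · rintro ⟨τ, τ', hR, hE⟩
    have h := hmono _ _ hR
    rw [hadd, hadd, map_pow_of_map_mul E hadd, map_pow_of_map_mul E hadd] at h
    linarith
  · intro h
    refine ⟨b ^ m, a ^ n, mul_comm (a ^ n) (b ^ m) ▸ hrefl _, ?_⟩
    rwa [map_pow_of_map_mul E hadd, map_pow_of_map_mul E hadd]

lemma exists_nat_div_btwn {w y : ℝ} (hw : 0 ≤ w) (hwy : w < y) :
    ∃ m n : ℕ, 0 < m ∧ 0 < n ∧ w < (m : ℝ) / n ∧ (m : ℝ) / n < y := by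
  obtain ⟨q, hwq, hqy⟩ := exists_rat_btwn hwy
  have hq : 0 < q := by exact_mod_cast hw.trans_lt hwq
  have hnum : ((q.num.natAbs : ℤ) : ℝ) = q.num := by
    exact_mod_cast Int.natAbs_of_nonneg (Rat.num_pos.mpr hq).le
  have hcast : (q : ℝ) = (q.num.natAbs : ℝ) / q.den := by
    rw [Rat.cast_def, ← hnum, Int.cast_natCast]
  exact ⟨q.num.natAbs, q.den, Int.natAbs_pos.mpr (Rat.num_pos.mpr hq).ne', q.pos,
    hcast ▸ hwq, hcast ▸ hqy⟩

lemma sSup_pos_nat_div_le {r : ℝ} (hr : 0 < r) :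
    sSup {x : ℝ | ∃ m n : ℕ, 0 < m ∧ 0 < n ∧ (m : ℝ) / n ≤ r ∧ x = (m : ℝ) / n} = r := by
  have approx : ∀ w < r, ∃ x ∈ {x : ℝ | ∃ m n : ℕ, 0 < m ∧ 0 < n ∧ (m : ℝ) / n ≤ r ∧
      x = (m : ℝ) / n}, w < x := by
    intro w hw
    obtain ⟨m, n, hm, hn, hwmn, hmnr⟩ := exists_nat_div_btwn (le_max_right w 0) (max_lt hw hr)
    exact ⟨_, ⟨m, n, hm, hn, hmnr.le, rfl⟩, (le_max_left w 0).trans_lt hwmn⟩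
  obtain ⟨x, hx, -⟩ := approx (r - 1) (by linarith)
  refine csSup_eq_of_forall_le_of_forall_lt_exists_gt ⟨x, hx⟩ ?_ approx
  rintro _ ⟨m, n, -, -, hle, rfl⟩
  exact hle

lemma sSup_battery_rate_eq {M : Type*} [CommMonoid M] (R : M → M → Prop)
    (hrefl : ∀ a, R a a) (E : M → ℝ) (hadd : ∀ a b, E (a * b) = E a + E b)
    (hmono : ∀ a b, R a b → E a ≥ E b) (a b : M) (ha : 0 < E a) (hb : 0 < E b) :
    sSup {x : ℝ | ∃ m n : ℕ, 0 < m ∧ 0 < n ∧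
        (∃ τ τ' : M, R (a ^ n * τ) (b ^ m * τ') ∧ E τ' ≥ E τ) ∧ x = (m : ℝ) / n}
      = E a / E b := by
  rw [← sSup_pos_nat_div_le (div_pos ha hb)]
  congr 1
  ext x
  refine exists₂_congr fun m n => and_congr_right fun _ => and_congr_right fun hn => ?_
  rw [exists_battery_conversion_iff R hrefl E hadd hmono,
    div_le_div_iff₀ (Nat.cast_pos.mpr hn) hb, mul_comm (E a)]

theorem zero_error_reversibility_general {M : Type*} [CommMonoid M] (R : M → M → Prop)
    (hrefl : ∀ a, R a a)
    (E : M → ℝ) (hadd : ∀ a b, E (a * b) = E a + E b)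
    (hmono : ∀ a b, R a b → E a ≥ E b)
    (a b : M) (ha : 0 < E a) (hb : 0 < E b) :
    sSup {x : ℝ | ∃ m n : ℕ, 0 < m ∧ 0 < n ∧
        (∃ τ τ' : M, R (a ^ n * τ) (b ^ m * τ') ∧ E τ' ≥ E τ) ∧ x = (m : ℝ) / n} *
      sSup {x : ℝ | ∃ m n : ℕ, 0 < m ∧ 0 < n ∧
        (∃ τ τ' : M, R (b ^ n * τ) (a ^ m * τ') ∧ E τ' ≥ E τ) ∧ x = (m : ℝ) / n} = 1 := by
  rw [sSup_battery_rate_eq R hrefl E hadd hmono a b ha hb,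
    sSup_battery_rate_eq R hrefl E hadd hmono b a hb ha]
  field_simp

/-- Reversibility: the zero-error battery-assisted rates satisfy
`R_ze(a→b) · R_ze(b→a) = 1`. -/
theorem zero_error_reversibility {M : Type*} [CommMonoid M] (R : M → M → Prop)
    (hrefl : ∀ a, R a a) (hcompat : ∀ a b c, R a b → R (a * c) (b * c))
    (E : M → ℝ) (hadd : ∀ a b, E (a * b) = E a + E b)
    (hmono : ∀ a b, R a b → E a ≥ E b)
    (a b : M) (ha : 0 < E a) (hb : 0 < E b) :
    sSup {x : ℝ | ∃ m n : ℕ, 0 < m ∧ 0 < n ∧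
        (∃ τ τ' : M, R (a ^ n * τ) (b ^ m * τ') ∧ E τ' ≥ E τ) ∧ x = (m : ℝ) / n} *
      sSup {x : ℝ | ∃ m n : ℕ, 0 < m ∧ 0 < n ∧
        (∃ τ τ' : M, R (b ^ n * τ) (a ^ m * τ') ∧ E τ' ≥ E τ) ∧ x = (m : ℝ) / n} = 1 :=
  zero_error_reversibility_general R hrefl E hadd hmono a b ha hb
end
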